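/- arXiv:1906.07713 — 3 statements merged into one kernel-verified Lean document; each statement's English description precedes it below -/
import Mathlib

section
/- Let z ∈ ℂ with Im z ≠ 0 and let R > 1 be real. Define Δt = 4·|Im z|·R/(R² − 1) and z_c = 2i·(Im z)/Δt. Then the Bernstein radius of the local preimage satisfies ρ(z_c) = |z_c + √(z_c+1)·√(z_c−1)| = R. -/
/-!
On the imaginary axis both square roots can be written down explicitly: with `s = √(c² + 1)`,
`a = √((s + 1)/2)` and `b = √((s - 1)/2)`, one has `√(1 + ic) = a ± ib` and `√(-1 + ic) = b ± ia`
(sign of `c`), whose product is `± is` since `a² + b² = s`. Hence `ρ(ic) = |c| + √(c² + 1)`, and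
this is the inverse of the Joukowski map `R ↦ (R² - 1)/(2R)`, which is exactly `|z_c|`.
-/

/-- The Bernstein radius `ρ(z) = |z + √(z+1)·√(z−1)|`, where the square roots
are principal complex square roots (argument in `(−π, π]`). -/
noncomputable def bernsteinRadius (z : ℂ) : ℝ :=
  ‖z + (z + 1) ^ ((1 : ℂ) / 2) * (z - 1) ^ ((1 : ℂ) / 2)‖

open Complex

namespace Complex

lemma cpow_inv_two_eq_of_im_nonneg {x : ℂ} (hx : 0 ≤ x.im) :
    x ^ (2⁻¹ : ℂ) = √((‖x‖ + x.re) / 2) + √((‖x‖ - x.re) / 2) * I := by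
  apply Complex.ext <;> simp [cpow_inv_two_re, cpow_inv_two_im_eq_sqrt hx]

lemma cpow_inv_two_eq_of_im_neg {x : ℂ} (hx : x.im < 0) :
    x ^ (2⁻¹ : ℂ) = √((‖x‖ + x.re) / 2) - √((‖x‖ - x.re) / 2) * I := by
  apply Complex.ext <;> simp [cpow_inv_two_re, cpow_inv_two_im_eq_neg_sqrt hx]

end Complex

lemma bernsteinRadius_ofReal_mul_I (c : ℝ) : bernsteinRadius (c * I) = |c| + √(c ^ 2 + 1) := by
  set s := √(c ^ 2 + 1) with hs
  have hs1 : 1 ≤ s := Real.one_le_sqrt.2 (by nlinarith)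
  have hu : ‖c * I + 1‖ = s := by
    rw [add_comm, ← ofReal_one, norm_add_mul_I, hs]; ring_nf
  have hv : ‖c * I - 1‖ = s := by
    rw [sub_eq_neg_add, ← ofReal_one, ← ofReal_neg, norm_add_mul_I, hs]; ring_nf
  have hu_re : (c * I + 1).re = 1 := by simp
  have hv_re : (c * I - 1).re = -1 := by simp
  set a := √((s + 1) / 2)
  set b := √((s - 1) / 2)
  have hab : a ^ 2 + b ^ 2 = s := by
    rw [Real.sq_sqrt (by linarith), Real.sq_sqrt (by linarith)]; ring
  rw [bernsteinRadius, one_div]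
  rcases le_or_gt 0 c with hc | hc
  · rw [cpow_inv_two_eq_of_im_nonneg (by simpa using hc),
      cpow_inv_two_eq_of_im_nonneg (by simpa using hc), hu, hv, hu_re, hv_re, sub_neg_eq_add,
      ← sub_eq_add_neg]
    have hprod : (c : ℂ) * I + (a + b * I) * (b + a * I) = ((c + s : ℝ) : ℂ) * I := by
      rw [← hab]; push_cast; ring_nf; rw [I_sq]; ring
    rw [hprod, norm_mul, norm_I, mul_one, norm_real, Real.norm_of_nonneg (by positivity),
      abs_of_nonneg hc]
  · rw [cpow_inv_two_eq_of_im_neg (by simpa using hc),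
      cpow_inv_two_eq_of_im_neg (by simpa using hc), hu, hv, hu_re, hv_re, sub_neg_eq_add,
      ← sub_eq_add_neg]
    have hprod : (c : ℂ) * I + (a - b * I) * (b - a * I) = ((c - s : ℝ) : ℂ) * I := by
      rw [← hab]; push_cast; ring_nf; rw [I_sq]; ring
    rw [hprod, norm_mul, norm_I, mul_one, norm_real, Real.norm_of_nonpos (by linarith),
      abs_of_neg hc]
    ring

lemma abs_add_sqrt_sq_add_one_of_abs_eq {c R : ℝ} (hR : 0 < R)
    (hc : |c| = (R ^ 2 - 1) / (2 * R)) : |c| + √(c ^ 2 + 1) = R := by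
  have hsq : c ^ 2 + 1 = ((R ^ 2 + 1) / (2 * R)) ^ 2 := by
    rw [← sq_abs c, hc]; field_simp; ring
  rw [hsq, Real.sqrt_sq (by positivity), hc]
  field_simp
  ring

/-- Let `z ∈ ℂ` with `Im z ≠ 0` and `R > 1` real. With
`Δt = 4|Im z|R/(R² − 1)` and `z_c = 2i·(Im z)/Δt`, the Bernstein radius of the
local preimage satisfies `ρ(z_c) = R`. -/
theorem stmt_7 (z : ℂ) (hz : z.im ≠ 0) (R : ℝ) (hR : 1 < R) :
    bernsteinRadius (2 * Complex.I * (z.im : ℂ) /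
        ((4 * |z.im| * R / (R ^ 2 - 1) : ℝ) : ℂ)) = R := by
  set Δt : ℝ := 4 * |z.im| * R / (R ^ 2 - 1)
  have hR2 : 0 < R ^ 2 - 1 := by nlinarith
  have hΔt : 0 < Δt := by
    have := abs_pos.2 hz
    positivity
  have hzc : 2 * I * (z.im : ℂ) / (Δt : ℂ) = ((2 * z.im / Δt : ℝ) : ℂ) * I := by
    push_cast; ring
  rw [hzc, bernsteinRadius_ofReal_mul_I]
  refine abs_add_sqrt_sq_add_one_of_abs_eq (by linarith) ?_
  rw [abs_div, abs_mul, abs_two, abs_of_pos hΔt]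
  simp only [Δt]
  field_simp
  ring
end

section
/- Let γ : ℝ → E be a curve into a two-dimensional (or any) real inner product space E, let s₀ ∈ ℝ, and suppose γ is twice differentiable at s₀ with ‖γ'(s)‖ = 1 for all s in a neighborhood of s₀ (unit-speed parametrization). Let n ∈ E be a unit vector with ⟪γ'(s₀), n⟫ = 0. Then lim_{s → s₀, s ≠ s₀} ⟪γ(s) − γ(s₀), n⟫ / ‖γ(s) − γ(s₀)‖² = ⟪γ''(s₀), n⟫ / 2. -/
open Filter Topology RealInnerProductSpace

private lemma div_div_aux (a b c : ℝ) (hc : c ≠ 0) : a / c / (b / c) = a / b := by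
  rcases eq_or_ne b 0 with rfl | hb
  · simp
  · field_simp

/-- Let `γ : ℝ → E` be a curve into a real inner product space,
twice differentiable at `s₀`, with unit speed `‖γ'(s)‖ = 1` in a neighborhood
of `s₀`. Let `n` be a unit vector orthogonal to `γ'(s₀)`. Then
`⟪γ(s) − γ(s₀), n⟫ / ‖γ(s) − γ(s₀)‖² → ⟪γ''(s₀), n⟫ / 2` as `s → s₀`, `s ≠ s₀`. -/
theorem stmt_8 {E : Type*} [NormedAddCommGroup E] [InnerProductSpace ℝ E]
    (γ : ℝ → E) (s₀ : ℝ)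
    (hγ : ∀ᶠ s in 𝓝 s₀, DifferentiableAt ℝ γ s)
    (hγ'' : DifferentiableAt ℝ (deriv γ) s₀)
    (hunit : ∀ᶠ s in 𝓝 s₀, ‖deriv γ s‖ = 1)
    (n : E) (hn : ‖n‖ = 1) (horth : ⟪deriv γ s₀, n⟫ = 0) :
    Tendsto (fun s : ℝ => ⟪γ s - γ s₀, n⟫ / ‖γ s - γ s₀‖ ^ 2)
      (𝓝[≠] s₀) (𝓝 (⟪deriv (deriv γ) s₀, n⟫ / 2)) := by
  set c : ℝ := ⟪deriv (deriv γ) s₀, n⟫ with hc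
  have hγ0 : DifferentiableAt ℝ γ s₀ := hγ.self_of_nhds
  have hne : ∀ᶠ s in 𝓝[≠] s₀, s ≠ s₀ := eventually_mem_nhdsWithin
  -- h s = ⟪deriv γ s, n⟫ has derivative c at s₀
  have hh : HasDerivAt (fun s => ⟪deriv γ s, n⟫) c s₀ := by
    have := HasDerivAt.inner ℝ hγ''.hasDerivAt (hasDerivAt_const s₀ n)
    simpa using this
  -- Step A: numerator over (s - s₀)^2 tends to c / 2
  have hnum : Tendsto (fun s : ℝ => ⟪γ s - γ s₀, n⟫ / (s - s₀) ^ 2)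
      (𝓝[≠] s₀) (𝓝 (c / 2)) := by
    apply HasDerivAt.lhopital_zero_nhdsNE
      (f' := fun s => ⟪deriv γ s, n⟫) (g' := fun s => 2 * (s - s₀))
    · filter_upwards [nhdsWithin_le_nhds hγ] with s hs
      have h1 : HasDerivAt (fun t => γ t - γ s₀) (deriv γ s) s := hs.hasDerivAt.sub_const _
      have := HasDerivAt.inner ℝ h1 (hasDerivAt_const s n)
      simpa using this
    · filter_upwards with s
      have : HasDerivAt (fun t : ℝ => (t - s₀) ^ 2) (2 * (s - s₀) ^ 1 * 1) s :=
        ((hasDerivAt_id s).sub_const s₀).pow 2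
      simpa using this
    · filter_upwards [hne] with s hs
      simpa [sub_eq_zero] using hs
    · have hct : ContinuousAt (fun s => ⟪γ s - γ s₀, n⟫) s₀ :=
        ((hγ0.sub_const _).inner ℝ (differentiableAt_const n)).continuousAt
      have h0 : ⟪γ s₀ - γ s₀, n⟫ = (0 : ℝ) := by simp
      have := hct.tendsto
      rw [h0] at this
      exact this.mono_left nhdsWithin_le_nhds
    · have hct : ContinuousAt (fun s : ℝ => (s - s₀) ^ 2) s₀ := by fun_prop
      have := hct.tendsto
      simp only [sub_self] at this
      simpa using this.mono_left nhdsWithin_le_nhds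
    · -- f'/g' tends to c/2
      have hslope : Tendsto (fun s => ⟪deriv γ s, n⟫ / (s - s₀)) (𝓝[≠] s₀) (𝓝 c) := by
        have := hasDerivAt_iff_tendsto_slope.mp hh
        refine this.congr fun s => ?_
        simp [slope_def_field, horth]
      have h2 := hslope.div_const 2
      have heq : (fun s => ⟪deriv γ s, n⟫ / (s - s₀) / 2)
          = fun s => ⟪deriv γ s, n⟫ / (2 * (s - s₀)) := by
        funext s; rw [div_div, mul_comm]
      rwa [heq] at h2
  -- Step B: denominator over (s - s₀)^2 tends to 1
  have hden : Tendsto (fun s : ℝ => ‖γ s - γ s₀‖ ^ 2 / (s - s₀) ^ 2)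
      (𝓝[≠] s₀) (𝓝 1) := by
    have hslope : Tendsto (slope γ s₀) (𝓝[≠] s₀) (𝓝 (deriv γ s₀)) :=
      hasDerivAt_iff_tendsto_slope.mp hγ0.hasDerivAt
    have h1 : Tendsto (fun s => ‖slope γ s₀ s‖ ^ 2) (𝓝[≠] s₀) (𝓝 (‖deriv γ s₀‖ ^ 2)) :=
      (hslope.norm).pow 2
    have hunit0 : ‖deriv γ s₀‖ = 1 := hunit.self_of_nhds
    rw [hunit0, one_pow] at h1
    refine h1.congr' ?_
    filter_upwards [hne] with s hs
    have hs' : s - s₀ ≠ 0 := sub_ne_zero.mpr hs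
    rw [slope_def_module, norm_smul, mul_pow, norm_inv, Real.norm_eq_abs, inv_pow, sq_abs]
    rw [inv_mul_eq_div]
  -- Combine
  have := hnum.div hden one_ne_zero
  rw [div_one] at this
  refine this.congr' ?_
  filter_upwards [hne] with s hs
  simp only [Pi.div_apply]
  exact div_div_aux _ _ _ (pow_ne_zero 2 (sub_ne_zero.mpr hs))
end

section
/- Let α > 0 and let x₀ ∈ ℝ² (identified with a two-dimensional real inner product space). Define u(x) = ∫_0^∞ exp(−α·‖x − x₀‖·cosh t) dt for x ≠ x₀. Then u is smooth on ℝ² \ {x₀} and satisfies the modified Helmholtz equation Δu(x) − α²·u(x) = 0 for all x ≠ x₀, where Δ denotes the Laplacian. -/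
open MeasureTheory Real Set Filter

noncomputable def Kc (n : ℕ) (z : ℂ) : ℂ :=
  ∫ t in Set.Ioi (0:ℝ), (Real.cosh t : ℂ) ^ n * Complex.exp (-(z * Real.cosh t))

noncomputable def Kr (n : ℕ) (r : ℝ) : ℝ :=
  ∫ t in Set.Ioi (0:ℝ), Real.cosh t ^ n * Real.exp (-(r * Real.cosh t))

lemma self_le_cosh {t : ℝ} : t ≤ Real.cosh t := by
  have h := Real.add_one_le_exp (t/2)
  have h2 : Real.exp t = Real.exp (t/2) * Real.exp (t/2) := by
    rw [← Real.exp_add]; ring_nf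
  have h3 : 0 < Real.exp (-t) := Real.exp_pos _
  rw [Real.cosh_eq]
  nlinarith [sq_nonneg (1 - t/2), Real.exp_pos (t/2)]

lemma pow_le_factorial_mul_exp (n : ℕ) {x : ℝ} (hx : 0 ≤ x) :
    x ^ n ≤ n.factorial * Real.exp x := by
  have h := Real.sum_le_exp_of_nonneg hx (n + 1)
  have h2 : x ^ n / n.factorial ≤ ∑ i ∈ Finset.range (n+1), x ^ i / i.factorial := by
    exact Finset.single_le_sum (f := fun i => x ^ i / (i.factorial : ℝ))
      (fun i _ => by positivity) (Finset.self_mem_range_succ n)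
  have h3 : (0:ℝ) < n.factorial := by positivity
  calc x ^ n = (x ^ n / n.factorial) * n.factorial := by field_simp
    _ ≤ Real.exp x * n.factorial := by
        apply mul_le_mul_of_nonneg_right (h2.trans h) h3.le
    _ = n.factorial * Real.exp x := mul_comm _ _

/-- the key pointwise bound -/
lemma cosh_pow_mul_exp_le (n : ℕ) {b : ℝ} (hb : 0 < b) {t : ℝ} (ht : 0 ≤ t) :
    Real.cosh t ^ n * Real.exp (-(b * Real.cosh t)) ≤
      (n.factorial * (2 / b) ^ n) * Real.exp (-(b / 2 * t)) := by
  have hc1 : (1:ℝ) ≤ Real.cosh t := Real.one_le_cosh t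
  have hc0 : (0:ℝ) < Real.cosh t := lt_of_lt_of_le one_pos hc1
  have key : Real.cosh t ^ n ≤ n.factorial * (2 / b) ^ n * Real.exp (b / 2 * Real.cosh t) := by
    have h := pow_le_factorial_mul_exp n (x := b / 2 * Real.cosh t) (by positivity)
    have : Real.cosh t ^ n = (b / 2 * Real.cosh t) ^ n * (2 / b) ^ n := by
      rw [← mul_pow]; field_simp
    rw [this]
    calc (b / 2 * Real.cosh t) ^ n * (2 / b) ^ n
        ≤ (n.factorial * Real.exp (b / 2 * Real.cosh t)) * (2 / b) ^ n := by
          apply mul_le_mul_of_nonneg_right h (by positivity)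
      _ = n.factorial * (2 / b) ^ n * Real.exp (b / 2 * Real.cosh t) := by ring
  calc Real.cosh t ^ n * Real.exp (-(b * Real.cosh t))
      ≤ (n.factorial * (2 / b) ^ n * Real.exp (b / 2 * Real.cosh t)) *
          Real.exp (-(b * Real.cosh t)) := by
        apply mul_le_mul_of_nonneg_right key (Real.exp_pos _).le
    _ = n.factorial * (2 / b) ^ n * Real.exp (-(b / 2 * Real.cosh t)) := by
        rw [mul_assoc, ← Real.exp_add]; ring_nf
    _ ≤ (n.factorial * (2 / b) ^ n) * Real.exp (-(b / 2 * t)) := by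
        apply mul_le_mul_of_nonneg_left _ (by positivity)
        apply Real.exp_le_exp.2
        have := self_le_cosh (t := t)
        nlinarith

lemma integrable_aux (n : ℕ) {b : ℝ} (hb : 0 < b) :
    IntegrableOn (fun t => Real.cosh t ^ n * Real.exp (-(b * Real.cosh t))) (Set.Ioi 0) := by
  apply Integrable.mono' (g := fun t => (n.factorial * (2 / b) ^ n) * Real.exp (-(b/2) * t))
  · exact (exp_neg_integrableOn_Ioi 0 (by positivity)).const_mul _
  · apply Continuous.aestronglyMeasurable; continuity
  · filter_upwards [ae_restrict_mem measurableSet_Ioi] with t ht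
    rw [Real.norm_of_nonneg (by positivity)]
    have := cosh_pow_mul_exp_le n hb (le_of_lt ht)
    calc Real.cosh t ^ n * Real.exp (-(b * Real.cosh t))
        ≤ (n.factorial * (2 / b) ^ n) * Real.exp (-(b / 2 * t)) := this
      _ = (n.factorial * (2 / b) ^ n) * Real.exp (-(b/2) * t) := by ring_nf

lemma norm_integrand (n : ℕ) (z : ℂ) (t : ℝ) :
    ‖(Real.cosh t : ℂ) ^ n * Complex.exp (-(z * Real.cosh t))‖ =
      Real.cosh t ^ n * Real.exp (-(z.re * Real.cosh t)) := by
  rw [norm_mul, norm_pow, Complex.norm_exp]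
  have h1 : ‖(Real.cosh t : ℂ)‖ = Real.cosh t := by
    rw [Complex.norm_real, Real.norm_eq_abs, abs_of_pos (Real.cosh_pos t)]
  have h2 : (-(z * (Real.cosh t : ℂ))).re = -(z.re * Real.cosh t) := by
    simp [Complex.mul_re]
  rw [h1, h2]

lemma integrableC (n : ℕ) {z : ℂ} (hz : 0 < z.re) :
    IntegrableOn (fun t => (Real.cosh t : ℂ) ^ n * Complex.exp (-(z * Real.cosh t)))
      (Set.Ioi (0:ℝ)) := by
  apply Integrable.mono' (g := fun t => Real.cosh t ^ n * Real.exp (-(z.re * Real.cosh t)))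
  · exact integrable_aux n hz
  · apply Continuous.aestronglyMeasurable
    apply Continuous.mul (by continuity)
    exact Complex.continuous_exp.comp (by continuity)
  · filter_upwards with t
    rw [norm_integrand]

lemma hasDerivAt_Kc (n : ℕ) {z : ℂ} (hz : 0 < z.re) :
    HasDerivAt (Kc n) (-(Kc (n+1) z)) z := by
  set ε := z.re / 2 with hε
  have hε0 : 0 < ε := by positivity
  have hball : ∀ w ∈ Metric.ball z ε, ε ≤ w.re := by
    intro w hw
    have h1 : |(w - z).re| ≤ ‖w - z‖ := Complex.abs_re_le_norm _
    rw [Metric.mem_ball, dist_eq_norm] at hw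
    have := abs_le.1 h1
    simp only [Complex.sub_re] at this
    have := this.1
    nlinarith [hw]
  have key := hasDerivAt_integral_of_dominated_loc_of_deriv_le (μ := volume.restrict (Set.Ioi 0))
      (F := fun w t => (Real.cosh t : ℂ) ^ n * Complex.exp (-(w * Real.cosh t)))
      (F' := fun w t => -((Real.cosh t : ℂ) ^ (n+1) * Complex.exp (-(w * Real.cosh t))))
      (x₀ := z)
      (bound := fun t => (n+1).factorial * (2 / ε) ^ (n+1) * Real.exp (-(ε / 2) * t))
      (Metric.ball_mem_nhds z hε0) ?_ (integrableC n hz) ?_ ?_ ?_ ?_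
  · have : (fun w => ∫ t in Set.Ioi (0:ℝ), (Real.cosh t : ℂ) ^ n *
        Complex.exp (-(w * Real.cosh t))) = Kc n := rfl
    rw [show -(Kc (n+1) z) = ∫ t in Set.Ioi (0:ℝ),
        -((Real.cosh t : ℂ) ^ (n+1) * Complex.exp (-(z * Real.cosh t))) by
      rw [MeasureTheory.integral_neg]; rfl]
    exact key.2
  · filter_upwards with w
    apply Continuous.aestronglyMeasurable
    apply Continuous.mul (by continuity)
    exact Complex.continuous_exp.comp (by continuity)
  · apply Continuous.aestronglyMeasurable
    apply Continuous.neg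
    apply Continuous.mul (by continuity)
    exact Complex.continuous_exp.comp (by continuity)
  · filter_upwards [ae_restrict_mem measurableSet_Ioi] with t ht w hw
    rw [norm_neg, norm_integrand]
    calc Real.cosh t ^ (n+1) * Real.exp (-(w.re * Real.cosh t))
        ≤ Real.cosh t ^ (n+1) * Real.exp (-(ε * Real.cosh t)) := by
          apply mul_le_mul_of_nonneg_left _ (by positivity)
          apply Real.exp_le_exp.2
          have h1 := hball w hw
          have h2 := Real.cosh_pos t
          nlinarith
      _ ≤ ((n+1).factorial * (2 / ε) ^ (n+1)) * Real.exp (-(ε / 2 * t)) :=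
          cosh_pow_mul_exp_le (n+1) hε0 (le_of_lt ht)
      _ = (n+1).factorial * (2 / ε) ^ (n+1) * Real.exp (-(ε / 2) * t) := by ring_nf
  · exact (exp_neg_integrableOn_Ioi 0 (by positivity)).const_mul _
  · filter_upwards with t w _
    have hd : HasDerivAt (fun w : ℂ => -(w * (Real.cosh t : ℂ))) (-(Real.cosh t : ℂ)) w := by
      have := ((hasDerivAt_id w).mul_const (Real.cosh t : ℂ)).neg
      simp only [id, one_mul] at this
      exact this
    have h2 := ((Complex.hasDerivAt_exp (-(w * (Real.cosh t : ℂ)))).comp w hd).const_mul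
      ((Real.cosh t : ℂ) ^ n)
    have heq : -((Real.cosh t : ℂ) ^ (n+1) * Complex.exp (-(w * Real.cosh t))) =
        (Real.cosh t : ℂ) ^ n * (Complex.exp (-(w * (Real.cosh t : ℂ))) * -(Real.cosh t : ℂ)) := by
      ring
    exact heq ▸ h2

lemma Kc_ofReal (n : ℕ) (r : ℝ) : Kc n (r : ℂ) = (Kr n r : ℂ) := by
  have h : ∀ t : ℝ, (Real.cosh t : ℂ) ^ n * Complex.exp (-((r:ℂ) * Real.cosh t)) =
      ((Real.cosh t ^ n * Real.exp (-(r * Real.cosh t)) : ℝ) : ℂ) := by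
    intro t
    push_cast [Complex.ofReal_exp]
    ring_nf
  rw [Kc, Kr]
  calc ∫ t in Set.Ioi (0:ℝ), (Real.cosh t : ℂ) ^ n * Complex.exp (-((r:ℂ) * Real.cosh t))
      = ∫ t in Set.Ioi (0:ℝ),
          ((Real.cosh t ^ n * Real.exp (-(r * Real.cosh t)) : ℝ) : ℂ) :=
        integral_congr_ae (Filter.Eventually.of_forall h)
    _ = _ := integral_ofReal (𝕜 := ℂ)

lemma hasDerivAt_Kr (n : ℕ) {r : ℝ} (hr : 0 < r) :
    HasDerivAt (Kr n) (-(Kr (n+1) r)) r := by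
  have hz : (0:ℝ) < (r : ℂ).re := by simpa using hr
  have h := (hasDerivAt_Kc n hz).real_of_complex
  have heq : (fun x : ℝ => (Kc n ↑x).re) = Kr n := by
    funext x
    rw [Kc_ofReal]
    simp
  have heq2 : (-(Kc (n+1) (r:ℂ))).re = -(Kr (n+1) r) := by
    rw [Kc_ofReal]
    simp
  rw [heq, heq2] at h
  exact h

lemma integrableKr (n : ℕ) {r : ℝ} (hr : 0 < r) :
    IntegrableOn (fun t => Real.cosh t ^ n * Real.exp (-(r * Real.cosh t))) (Set.Ioi 0) :=
  integrable_aux n hr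

/-- The Bessel ODE identity: `K₁(r) = r (K₂(r) - K₀(r))`. -/
lemma Kr_ode {r : ℝ} (hr : 0 < r) : Kr 1 r - r * Kr 2 r + r * Kr 0 r = 0 := by
  have key := integral_Ioi_of_hasDerivAt_of_tendsto
      (f := fun t => Real.sinh t * Real.exp (-(r * Real.cosh t)))
      (f' := fun t => Real.cosh t * Real.exp (-(r * Real.cosh t))
        - r * (Real.cosh t ^ 2 - 1) * Real.exp (-(r * Real.cosh t)))
      (a := 0) (m := 0) ?_ ?_ ?_ ?_
  · have e1 : ∫ t in Set.Ioi (0:ℝ), (Real.cosh t * Real.exp (-(r * Real.cosh t))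
        - r * (Real.cosh t ^ 2 - 1) * Real.exp (-(r * Real.cosh t)))
        = Kr 1 r - r * Kr 2 r + r * Kr 0 r := by
      have i0 := integrableKr 0 hr
      have i1 := integrableKr 1 hr
      have i2 := integrableKr 2 hr
      simp only [pow_one, pow_zero, one_mul] at i0 i1 i2
      have e2 : ∀ t : ℝ, Real.cosh t * Real.exp (-(r * Real.cosh t))
          - r * (Real.cosh t ^ 2 - 1) * Real.exp (-(r * Real.cosh t))
          = Real.cosh t * Real.exp (-(r * Real.cosh t))
            - r * (Real.cosh t ^ 2 * Real.exp (-(r * Real.cosh t)))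
            + r * Real.exp (-(r * Real.cosh t)) := by intro t; ring
      rw [MeasureTheory.integral_congr_ae (Filter.Eventually.of_forall e2)]
      rw [MeasureTheory.integral_add (by exact (i1.sub ((i2.const_mul r))) )
        ((i0.const_mul r)), MeasureTheory.integral_sub i1 (i2.const_mul r),
        MeasureTheory.integral_const_mul, MeasureTheory.integral_const_mul]
      simp only [Kr, pow_one, pow_zero, one_mul]
    rw [e1] at key
    rw [key]
    simp
  · exact (Real.continuous_sinh.mul (Real.continuous_exp.comp (by continuity))).continuousWithinAt
  · intro t _
    have hc : HasDerivAt (fun t : ℝ => -(r * Real.cosh t)) (-(r * Real.sinh t)) t := by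
      exact ((Real.hasDerivAt_cosh t).const_mul r).neg
    have he := (Real.hasDerivAt_exp (-(r * Real.cosh t))).comp t hc
    have := (Real.hasDerivAt_sinh t).mul he
    refine this.congr_deriv (Eq.symm ?_)
    simp only [Function.comp_apply]
    have hs := Real.sinh_sq t
    linear_combination (r * Real.exp (-(r * Real.cosh t))) * hs
  · apply Integrable.sub
    · have := integrableKr 1 hr; simp only [pow_one] at this; exact this
    · have i0 := integrableKr 0 hr
      have i2 := integrableKr 2 hr
      simp only [pow_zero, one_mul] at i0
      have h := (i2.sub i0).const_mul r
      apply h.congr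
      filter_upwards with t
      simp only [Pi.sub_apply]
      ring
  · -- tendsto 0 at top
    refine squeeze_zero_norm'
      (a := fun t => (Nat.factorial 1 * (2 / r) ^ 1) * Real.exp (-(r/2) * t)) ?_ ?_
    · filter_upwards [Filter.eventually_ge_atTop (0:ℝ)] with t ht
      have h1 : |Real.sinh t| ≤ Real.cosh t := by
        rw [abs_le]
        constructor <;> nlinarith [Real.sinh_lt_cosh t, Real.cosh_eq t, Real.sinh_eq t,
          Real.exp_pos t, Real.exp_pos (-t)]
      rw [Real.norm_eq_abs, abs_mul, abs_of_pos (Real.exp_pos _)]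
      calc |Real.sinh t| * Real.exp (-(r * Real.cosh t))
          ≤ Real.cosh t * Real.exp (-(r * Real.cosh t)) := by
            apply mul_le_mul_of_nonneg_right h1 (Real.exp_pos _).le
        _ = Real.cosh t ^ 1 * Real.exp (-(r * Real.cosh t)) := by ring
        _ ≤ (Nat.factorial 1 * (2 / r) ^ 1) * Real.exp (-(r / 2 * t)) :=
            cosh_pow_mul_exp_le 1 hr ht
        _ = (Nat.factorial 1 * (2 / r) ^ 1) * Real.exp (-(r/2) * t) := by ring_nf
    · rw [show (0:ℝ) = (Nat.factorial 1 * (2 / r) ^ 1) * 0 by ring]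
      apply Filter.Tendsto.const_mul
      have h0 : Filter.Tendsto (fun t : ℝ => (r/2) * t) Filter.atTop Filter.atTop :=
        Filter.Tendsto.const_mul_atTop (by positivity) Filter.tendsto_id
      have h1 := Real.tendsto_exp_neg_atTop_nhds_zero.comp h0
      have heq : ((fun x : ℝ => Real.exp (-x)) ∘ fun t : ℝ => r/2 * t)
          = fun t : ℝ => Real.exp (-(r/2) * t) := by
        funext t
        simp [neg_mul]
      rwa [heq] at h1

lemma analyticAt_Kr {r : ℝ} (hr : 0 < r) : AnalyticAt ℝ (Kr 0) r := by
  have hopen : IsOpen {z : ℂ | 0 < z.re} := isOpen_lt continuous_const Complex.continuous_re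
  have hdiff : DifferentiableOn ℂ (Kc 0) {z : ℂ | 0 < z.re} := fun z hz =>
    ((hasDerivAt_Kc 0 hz).differentiableAt).differentiableWithinAt
  have han := hdiff.analyticOnNhd hopen
  have A : AnalyticAt ℝ (Kc 0) (r : ℂ) :=
    (han (r : ℂ) (by simpa using hr)).restrictScalars
  have h1 : AnalyticAt ℝ (fun x : ℝ => Kc 0 (x : ℂ)) r := by
    have := A.comp (Complex.ofRealCLM.analyticAt r)
    exact this
  have h2 : AnalyticAt ℝ (fun x : ℝ => (Kc 0 (x : ℂ)).re) r := by
    have hre : AnalyticAt ℝ (fun z : ℂ => z.re) ((fun x : ℝ => Kc 0 (x : ℂ)) r) :=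
      Complex.reCLM.analyticAt _
    have := AnalyticAt.comp (f := fun x : ℝ => Kc 0 (x : ℂ)) (g := fun z : ℂ => z.re) hre h1
    exact this
  have heq : (fun x : ℝ => (Kc 0 (x : ℂ)).re) = Kr 0 := by
    funext x
    rw [Kc_ofReal]
    simp
  rwa [heq] at h2

/-- directional derivative along a line -/
lemma fderiv_apply_eq_deriv_line {f : EuclideanSpace ℝ (Fin 2) → ℝ}
    {y v : EuclideanSpace ℝ (Fin 2)} (hf : DifferentiableAt ℝ f y) :
    fderiv ℝ f y v = deriv (fun c : ℝ => f (y + c • v)) 0 := by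
  have hline : HasDerivAt (fun c : ℝ => y + c • v) v 0 := by
    simpa using ((hasDerivAt_id (0:ℝ)).smul_const v).const_add y
  have hf' : HasFDerivAt f (fderiv ℝ f y) (y + (0:ℝ) • v) := by
    simp only [zero_smul, add_zero]
    exact hf.hasFDerivAt
  have := hf'.comp_hasDerivAt 0 hline
  rw [show (fun c : ℝ => f (y + c • v)) = (f ∘ fun c : ℝ => y + c • v) from rfl, this.deriv]

open ContDiff in
lemma contDiffOn_u (α : ℝ) (hα : 0 < α) (x₀ : EuclideanSpace ℝ (Fin 2)) :
    ContDiffOn ℝ ω (fun x : EuclideanSpace ℝ (Fin 2) => Kr 0 (α * ‖x - x₀‖)) {x₀}ᶜ := by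
  intro x hx
  have hxne : x - x₀ ≠ 0 := sub_ne_zero.2 hx
  have hnorm : (0:ℝ) < ‖x - x₀‖ := norm_pos_iff.2 hxne
  have h1 : ContDiffAt ℝ ω (fun y : EuclideanSpace ℝ (Fin 2) => α * ‖y - x₀‖) x :=
    contDiffAt_const.mul (ContDiffAt.norm ℝ (contDiffAt_id.sub contDiffAt_const) hxne)
  have h2 : ContDiffAt ℝ ω (Kr 0) (α * ‖x - x₀‖) :=
    (analyticAt_Kr (by positivity)).contDiffAt
  exact (h2.comp x h1).contDiffWithinAt

open RealInnerProductSpace in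
open ContDiff in
set_option maxHeartbeats 1000000 in
lemma second_deriv_term (α : ℝ) (hα : 0 < α) (x₀ x : EuclideanSpace ℝ (Fin 2)) (hx : x ≠ x₀)
    (i : Fin 2) :
    fderiv ℝ (fun y => fderiv ℝ (fun z : EuclideanSpace ℝ (Fin 2) => Kr 0 (α * ‖z - x₀‖)) y
        (EuclideanSpace.single i 1)) x (EuclideanSpace.single i 1)
    = α ^ 2 * Kr 2 (α * ‖x - x₀‖) * ((x - x₀) i ^ 2 / ‖x - x₀‖ ^ 2)
      - α * Kr 1 (α * ‖x - x₀‖) * (1 / ‖x - x₀‖ - (x - x₀) i ^ 2 / ‖x - x₀‖ ^ 3) := by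
  set u : EuclideanSpace ℝ (Fin 2) → ℝ := fun z => Kr 0 (α * ‖z - x₀‖) with hu
  set e : EuclideanSpace ℝ (Fin 2) := EuclideanSpace.single i 1 with he
  set w : EuclideanSpace ℝ (Fin 2) := x - x₀ with hw
  set r : ℝ := ‖w‖ with hrdef
  have hwne : w ≠ 0 := sub_ne_zero.2 hx
  have hr : 0 < r := norm_pos_iff.2 hwne
  set wi : ℝ := w i with hwi
  set q : ℝ → ℝ := fun c => r ^ 2 + 2 * wi * c + c ^ 2 with hq
  have hq0 : q 0 = r ^ 2 := by simp [hq]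
  -- norm along the line
  have hline_sq : ∀ c : ℝ, ‖w + c • e‖ ^ 2 = q c := by
    intro c
    rw [norm_add_sq_real]
    have h1 : ⟪w, c • e⟫ = c * wi := by
      rw [real_inner_smul_right, he, EuclideanSpace.inner_single_right]
      simp [hwi]
    have h2 : ‖c • e‖ ^ 2 = c ^ 2 := by
      rw [norm_smul, he, EuclideanSpace.norm_single]
      simp [Real.norm_eq_abs, mul_pow, sq_abs]
    rw [h1, h2, hq]
    ring
  have hline : ∀ c : ℝ, ‖w + c • e‖ = Real.sqrt (q c) := by
    intro c
    rw [← hline_sq c]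
    exact (Real.sqrt_sq (norm_nonneg _)).symm
  have hopen : IsOpen ({x₀}ᶜ : Set (EuclideanSpace ℝ (Fin 2))) := isOpen_compl_singleton
  have hsmooth := contDiffOn_u α hα x₀
  have hdiffAt : ∀ y : EuclideanSpace ℝ (Fin 2), y ≠ x₀ → DifferentiableAt ℝ u y := by
    intro y hy
    exact ((hsmooth.contDiffAt (hopen.mem_nhds hy)).of_le (le_top : (1 : WithTop ℕ∞) ≤ ⊤)).differentiableAt one_ne_zero
  -- derivative of the 1-d profile
  have hqderiv : ∀ c : ℝ, HasDerivAt q (2 * wi + 2 * c) c := by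
    intro c
    have h1 : HasDerivAt (fun c : ℝ => r ^ 2 + 2 * wi * c) (2 * wi) c := by
      simpa using ((hasDerivAt_id c).const_mul (2 * wi)).const_add (r ^ 2)
    have h2 : HasDerivAt (fun c : ℝ => c ^ 2) (2 * c) c := by
      simpa using hasDerivAt_pow 2 c
    exact h1.add h2
  set G : ℝ → ℝ := fun c =>
    -(Kr 1 (α * Real.sqrt (q c))) * (α * ((2 * wi + 2 * c) / (2 * Real.sqrt (q c)))) with hG
  have hprof : ∀ c : ℝ, 0 < q c →
      HasDerivAt (fun d : ℝ => Kr 0 (α * Real.sqrt (q d))) (G c) c := by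
    intro c hqc
    have hsqrt := (hqderiv c).sqrt (ne_of_gt hqc)
    have hc := hsqrt.const_mul α
    have hs0 : 0 < Real.sqrt (q c) := Real.sqrt_pos.2 hqc
    have hK := (hasDerivAt_Kr 0 (mul_pos hα hs0)).comp c hc
    have : HasDerivAt (fun d : ℝ => Kr 0 (α * Real.sqrt (q d)))
        (-(Kr 1 (α * Real.sqrt (q c))) * (α * ((2 * wi + 2 * c) / (2 * Real.sqrt (q c))))) c := hK
    exact this
  -- first derivative along the line in terms of G
  have key_fderiv : ∀ c : ℝ, 0 < q c → fderiv ℝ u (x + c • e) e = G c := by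
    intro c hqc
    have hs0 : 0 < Real.sqrt (q c) := Real.sqrt_pos.2 hqc
    have hsub : (x + c • e) - x₀ = w + c • e := by
      rw [hw]; abel
    have hynorm : ‖(x + c • e) - x₀‖ = Real.sqrt (q c) := by rw [hsub]; exact hline c
    have hy : (x + c • e) ≠ x₀ := by
      intro h
      rw [sub_eq_zero.2 h] at hynorm
      simp only [norm_zero] at hynorm
      exact absurd hynorm.symm (ne_of_gt hs0)
    rw [fderiv_apply_eq_deriv_line (hdiffAt _ hy)]
    have hfun : (fun d : ℝ => u ((x + c • e) + d • e))
        = fun d : ℝ => Kr 0 (α * Real.sqrt (q (c + d))) := by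
      funext d
      have h1 : ((x + c • e) + d • e) - x₀ = w + (c + d) • e := by
        rw [hw, add_smul]; abel
      show Kr 0 (α * ‖((x + c • e) + d • e) - x₀‖) = _
      rw [h1, hline]
    rw [hfun]
    have hshift : HasDerivAt (fun d : ℝ => c + d) 1 0 := by
      simpa using (hasDerivAt_id (0:ℝ)).const_add c
    have hmain : HasDerivAt (fun d : ℝ => Kr 0 (α * Real.sqrt (q d))) (G c)
        ((fun d : ℝ => c + d) 0) := by
      simpa using hprof c hqc
    have hcomp := hmain.comp 0 hshift
    have hD : HasDerivAt (fun d : ℝ => Kr 0 (α * Real.sqrt (q (c + d)))) (G c * 1) 0 := hcomp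
    rw [hD.deriv, mul_one]
  -- the second derivative
  have hq0pos : 0 < q 0 := by rw [hq0]; positivity
  have hC2 : ContDiffAt ℝ 2 u x := by
    have := hsmooth.contDiffAt (hopen.mem_nhds (by exact hx : x ∈ ({x₀}ᶜ : Set _)))
    exact this.of_le le_top
  have hfd1 : ContDiffAt ℝ 1 (fderiv ℝ u) x := hC2.fderiv_right (by norm_num)
  have hF : DifferentiableAt ℝ (fun y => fderiv ℝ u y e) x := by
    have happ := (ContinuousLinearMap.apply ℝ ℝ e).differentiable.differentiableAt
      (x := fderiv ℝ u x)
    exact happ.comp x (hfd1.differentiableAt one_ne_zero)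
  rw [fderiv_apply_eq_deriv_line hF]
  -- identify the function near 0 with G
  have hqcont : Continuous q := by
    rw [hq]; continuity
  have hev : ∀ᶠ c in nhds (0:ℝ), 0 < q c :=
    hqcont.continuousAt.eventually (eventually_gt_nhds hq0pos)
  have hevEq : (fun c : ℝ => fderiv ℝ u (x + c • e) e) =ᶠ[nhds 0] G := by
    filter_upwards [hev] with c hc
    exact key_fderiv c hc
  rw [hevEq.deriv_eq]
  -- compute deriv G 0 explicitly
  have hs0 : Real.sqrt (q 0) = r := by rw [hq0]; exact Real.sqrt_sq hr.le
  have hsq0pos : 0 < Real.sqrt (q 0) := Real.sqrt_pos.2 hq0pos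
  have hsqrt0 := (hqderiv 0).sqrt (ne_of_gt hq0pos)
  have hA0 := hsqrt0.const_mul α
  have hρpos : (0:ℝ) < α * Real.sqrt (q 0) := mul_pos hα hsq0pos
  have hB := (hasDerivAt_Kr 1 hρpos).comp 0 hA0
  have hnum : HasDerivAt (fun c : ℝ => 2 * wi + 2 * c) 2 0 := by
    simpa using ((hasDerivAt_id (0:ℝ)).const_mul 2).const_add (2 * wi)
  have hden := hsqrt0.const_mul 2
  have hden0 : (2 : ℝ) * Real.sqrt (q 0) ≠ 0 := ne_of_gt (mul_pos two_pos hsq0pos)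
  have hrat := hnum.div hden hden0
  have hGderiv := (hB.neg).mul (hrat.const_mul α)
  have hGd : HasDerivAt G
      (-(-(Kr 2 (α * Real.sqrt (q 0))) * (α * ((2 * wi + 2 * 0) / (2 * Real.sqrt (q 0)))))
          * (α * ((2 * wi + 2 * 0) / (2 * Real.sqrt (q 0))))
        + -(Kr 1 (α * Real.sqrt (q 0)))
          * (α * ((2 * (2 * Real.sqrt (q 0))
              - (2 * wi + 2 * 0) * (2 * ((2 * wi + 2 * 0) / (2 * Real.sqrt (q 0)))))
            / (2 * Real.sqrt (q 0)) ^ 2))) 0 := hGderiv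
  rw [hGd.deriv]
  -- final algebra
  rw [hs0]
  have hrne : r ≠ 0 := ne_of_gt hr
  have hρ : α * Real.sqrt (q 0) = α * r := by rw [hs0]
  field_simp
  ring



/-- The Laplacian of a function `u : ℝ² → ℝ`, as the sum of the second
directional derivatives along the standard coordinate directions. -/
noncomputable def laplacian (u : EuclideanSpace ℝ (Fin 2) → ℝ)
    (x : EuclideanSpace ℝ (Fin 2)) : ℝ :=
  ∑ i : Fin 2,
    fderiv ℝ (fun y => fderiv ℝ u y (EuclideanSpace.single i 1)) x
      (EuclideanSpace.single i 1)

/-- For `α > 0` and `x₀ ∈ ℝ²`, the function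
`u(x) = ∫_0^∞ exp(−α‖x − x₀‖ cosh t) dt = K₀(α‖x − x₀‖)` is smooth away from
`x₀` and satisfies the modified Helmholtz equation `Δu − α²u = 0` there. -/
theorem stmt_9 (α : ℝ) (hα : 0 < α) (x₀ : EuclideanSpace ℝ (Fin 2)) :
    ContDiffOn ℝ (⊤ : ℕ∞)
      (fun x : EuclideanSpace ℝ (Fin 2) =>
        ∫ t in Set.Ioi (0 : ℝ), Real.exp (-(α * ‖x - x₀‖ * Real.cosh t)))
      {x₀}ᶜ ∧
    ∀ x : EuclideanSpace ℝ (Fin 2), x ≠ x₀ →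
      laplacian
        (fun x : EuclideanSpace ℝ (Fin 2) =>
          ∫ t in Set.Ioi (0 : ℝ), Real.exp (-(α * ‖x - x₀‖ * Real.cosh t))) x -
      α ^ 2 * ∫ t in Set.Ioi (0 : ℝ), Real.exp (-(α * ‖x - x₀‖ * Real.cosh t)) = 0 := by
  have hu : (fun x : EuclideanSpace ℝ (Fin 2) =>
      ∫ t in Set.Ioi (0:ℝ), Real.exp (-(α * ‖x - x₀‖ * Real.cosh t)))
      = fun x => Kr 0 (α * ‖x - x₀‖) := by
    funext x
    simp only [Kr, pow_zero, one_mul]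
  constructor
  · rw [hu]
    exact (contDiffOn_u α hα x₀).of_le le_top
  · intro x hx
    have hxne : x - x₀ ≠ 0 := sub_ne_zero.2 hx
    have hr : (0:ℝ) < ‖x - x₀‖ := norm_pos_iff.2 hxne
    have hrne : ‖x - x₀‖ ≠ 0 := ne_of_gt hr
    have hxint : (∫ t in Set.Ioi (0:ℝ), Real.exp (-(α * ‖x - x₀‖ * Real.cosh t)))
        = Kr 0 (α * ‖x - x₀‖) := by simp only [Kr, pow_zero, one_mul]
    rw [hxint, hu]
    simp only [laplacian]
    have hterm := second_deriv_term α hα x₀ x hx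
    rw [Finset.sum_congr rfl (fun i _ => hterm i), Fin.sum_univ_two]
    have hsum : (x - x₀) 0 ^ 2 + (x - x₀) 1 ^ 2 = ‖x - x₀‖ ^ 2 := by
      have h := EuclideanSpace.norm_eq (x - x₀)
      rw [h, Real.sq_sqrt (by positivity)]
      rw [Fin.sum_univ_two]
      simp [Real.norm_eq_abs, sq_abs]
    have hρ : (0:ℝ) < α * ‖x - x₀‖ := by positivity
    have hode := Kr_ode hρ
    have hB : Kr 1 (α * ‖x - x₀‖) = α * ‖x - x₀‖ * Kr 2 (α * ‖x - x₀‖)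
        - α * ‖x - x₀‖ * Kr 0 (α * ‖x - x₀‖) := by linarith [hode]
    have hw1 : (x - x₀) 1 ^ 2 = ‖x - x₀‖ ^ 2 - (x - x₀) 0 ^ 2 := by linarith [hsum]
    rw [hB, hw1]
    field_simp
    ring
end
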